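/- The piecewise potential σ with β = 2 is twice continuously differentiable at s = d² if and only if k_r = α² k_a. -/

import Mathlib

/-!
Each branch of `σ` has the form `c * u s ^ 2` with `u (d²) = 0`, so both branches vanish together
with their first derivatives at `d²`, and their second derivatives there are `2 c u'(d²)²`,
i.e. `2 k_r / d⁴` and `2 k_a α² / d⁴`. A function glued at a point from two germs that are `Cⁿ`
there is itself `Cⁿ` at that point exactly when the two germs have the same derivatives of
order `≤ n` at it, by induction on `n`: near the junction, the derivative of the glued function
is the gluing of the derivatives.
-/

open Set Filter Topology

section
variable {𝕜 F : Type*} [NontriviallyNormedField 𝕜] [NormedAddCommGroup F] [NormedSpace 𝕜 F]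

theorem contDiffAt_zero_iff_eventually_continuousAt {f : 𝕜 → F} {x : 𝕜} :
    ContDiffAt 𝕜 0 f x ↔ ∀ᶠ y in 𝓝 x, ContinuousAt f y := by
  refine ⟨fun h => (h.eventually (by simp)).mono fun y hy => hy.continuousAt, fun h => ?_⟩
  exact contDiffAt_zero.mpr ⟨_, h, fun y hy => ContinuousAt.continuousWithinAt hy⟩

theorem contDiffAt_succ_iff_deriv {f : 𝕜 → F} {x : 𝕜} {n : ℕ} :
    ContDiffAt 𝕜 (n + 1) f x ↔
      (∀ᶠ y in 𝓝 x, DifferentiableAt 𝕜 f y) ∧ ContDiffAt 𝕜 n (deriv f) x := by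
  refine ⟨fun h => ⟨?_, h.derivWithin le_rfl⟩, fun ⟨hd, h⟩ => ?_⟩
  · filter_upwards [h.eventually (by simp)] with y hy
    exact hy.differentiableAt (by simp)
  · refine contDiffAt_succ_iff_hasFDerivAt.mpr ⟨fderiv 𝕜 f, ⟨_, hd, fun y hy => hy.hasFDerivAt⟩, ?_⟩
    have hfd : fderiv 𝕜 f = ContinuousLinearMap.toSpanSingletonCLE ∘ deriv f := by
      funext y; exact toSpanSingleton_deriv.symm
    rw [hfd]
    exact ContinuousLinearMap.toSpanSingletonCLE.contDiff.contDiffAt.comp x h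

theorem UniqueDiffWithinAt.deriv_eq_of_eventuallyEq {f₁ f₂ : 𝕜 → F} {s : Set 𝕜} {x : 𝕜}
    (hs : UniqueDiffWithinAt 𝕜 s x) (h₁ : DifferentiableAt 𝕜 f₁ x)
    (h₂ : DifferentiableAt 𝕜 f₂ x) (he : f₁ =ᶠ[𝓝[s] x] f₂) (hx : f₁ x = f₂ x) :
    deriv f₁ x = deriv f₂ x :=
  hs.eq_deriv s (h₁.hasDerivAt.hasDerivWithinAt.congr_of_eventuallyEq he.symm hx.symm)
    h₂.hasDerivAt.hasDerivWithinAt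

end

section
variable {F : Type*} {f g : ℝ → F} {a : ℝ}

theorem ite_lt_self : (if a < a then f a else g a) = g a := if_neg (lt_irrefl a)

theorem ite_lt_eventuallyEq_nhdsLT : (fun x => if x < a then f x else g x) =ᶠ[𝓝[<] a] f :=
  eventually_nhdsWithin_of_forall fun _ hy => if_pos hy

theorem ite_lt_eventuallyEq_nhdsGE : (fun x => if x < a then f x else g x) =ᶠ[𝓝[≥] a] g :=
  eventually_nhdsWithin_of_forall fun _ hy => if_neg (not_lt.mpr hy)

theorem ite_lt_eventuallyEq_of_lt {y : ℝ} (hy : y < a) :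
    (fun x => if x < a then f x else g x) =ᶠ[𝓝 y] f :=
  eventually_of_mem (Iio_mem_nhds hy) fun _ hz => if_pos hz

theorem ite_lt_eventuallyEq_of_gt {y : ℝ} (hy : a < y) :
    (fun x => if x < a then f x else g x) =ᶠ[𝓝 y] g :=
  eventually_of_mem (Ioi_mem_nhds hy) fun _ hz => if_neg (not_lt.mpr hz.le)

section Continuity
variable [TopologicalSpace F]

theorem ContinuousAt.ite_lt (hf : ContinuousAt f a) (hg : ContinuousAt g a) (h₀ : f a = g a) :
    ContinuousAt (fun x => if x < a then f x else g x) a := by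
  refine continuousAt_iff_continuous_left_right.mpr ⟨?_, ?_⟩
  · exact continuousWithinAt_Iio_iff_Iic.mp <| hf.continuousWithinAt.congr_of_eventuallyEq
      ite_lt_eventuallyEq_nhdsLT (ite_lt_self.trans h₀.symm)
  · exact hg.continuousWithinAt.congr_of_eventuallyEq ite_lt_eventuallyEq_nhdsGE ite_lt_self

theorem continuousAt_ite_lt {y : ℝ} (hf : ContinuousAt f y) (hg : ContinuousAt g y)
    (h₀ : f a = g a) : ContinuousAt (fun x => if x < a then f x else g x) y := by
  rcases lt_trichotomy y a with hy | rfl | hy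
  · exact hf.congr_of_eventuallyEq (ite_lt_eventuallyEq_of_lt hy)
  · exact hf.ite_lt hg h₀
  · exact hg.congr_of_eventuallyEq (ite_lt_eventuallyEq_of_gt hy)

theorem eq_of_continuousAt_ite_lt [T2Space F] (hf : ContinuousAt f a)
    (h : ContinuousAt (fun x => if x < a then f x else g x) a) : f a = g a := by
  refine (tendsto_nhds_unique (l := 𝓝[<] a) (hf.tendsto.mono_left nhdsWithin_le_nhds) ?_).trans
    (ite_lt_self (f := f))
  exact (h.tendsto.mono_left nhdsWithin_le_nhds).congr' ite_lt_eventuallyEq_nhdsLT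

end Continuity

section Derivative
variable [NormedAddCommGroup F] [NormedSpace ℝ F]

theorem HasDerivAt.ite_lt {f' : F} (hf : HasDerivAt f f' a) (hg : HasDerivAt g f' a)
    (h₀ : f a = g a) : HasDerivAt (fun x => if x < a then f x else g x) f' a := by
  rw [← hasDerivWithinAt_univ, ← Iic_union_Ici]
  refine HasDerivWithinAt.union ?_ ?_
  · exact (hf.hasDerivWithinAt.congr_of_eventuallyEq ite_lt_eventuallyEq_nhdsLT
      (ite_lt_self.trans h₀.symm)).Iic_of_Iio
  · exact hg.hasDerivWithinAt.congr_of_eventuallyEq ite_lt_eventuallyEq_nhdsGE ite_lt_self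

theorem hasDerivAt_ite_lt {y : ℝ} (hf : DifferentiableAt ℝ f y)
    (hg : DifferentiableAt ℝ g y) (h₀ : f a = g a) (h₁ : deriv f a = deriv g a) :
    HasDerivAt (fun x => if x < a then f x else g x)
      (if y < a then deriv f y else deriv g y) y := by
  rcases lt_trichotomy y a with hy | rfl | hy
  · rw [if_pos hy]
    exact hf.hasDerivAt.congr_of_eventuallyEq (ite_lt_eventuallyEq_of_lt hy)
  · rw [if_neg (lt_irrefl y)]
    exact (h₁ ▸ hf.hasDerivAt).ite_lt hg.hasDerivAt h₀
  · rw [if_neg (not_lt.mpr hy.le)]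
    exact hg.hasDerivAt.congr_of_eventuallyEq (ite_lt_eventuallyEq_of_gt hy)

theorem deriv_eq_of_differentiableAt_ite_lt (hf : DifferentiableAt ℝ f a)
    (hg : DifferentiableAt ℝ g a) (h : DifferentiableAt ℝ (fun x => if x < a then f x else g x) a)
    (h₀ : f a = g a) : deriv f a = deriv g a :=
  ((uniqueDiffWithinAt_Iio a).deriv_eq_of_eventuallyEq h hf ite_lt_eventuallyEq_nhdsLT
    (ite_lt_self.trans h₀.symm)).symm.trans <|
    (uniqueDiffWithinAt_Ici a).deriv_eq_of_eventuallyEq h hg ite_lt_eventuallyEq_nhdsGE ite_lt_self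

theorem contDiffAt_ite_lt_iff {n : ℕ} (hf : ContDiffAt ℝ n f a) (hg : ContDiffAt ℝ n g a) :
    ContDiffAt ℝ n (fun x => if x < a then f x else g x) a ↔
      ∀ k ≤ n, iteratedDeriv k f a = iteratedDeriv k g a := by
  induction n generalizing f g with
  | zero =>
    simp only [Nat.le_zero, forall_eq, iteratedDeriv_zero, CharP.cast_eq_zero] at hf hg ⊢
    refine ⟨fun h => eq_of_continuousAt_ite_lt hf.continuousAt h.continuousAt, fun h₀ => ?_⟩
    rw [contDiffAt_zero_iff_eventually_continuousAt] at hf hg ⊢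
    filter_upwards [hf, hg] with y hfy hgy
    exact continuousAt_ite_lt hfy hgy h₀
  | succ n ih =>
    push_cast at hf hg ⊢
    obtain ⟨hfd, hf'⟩ := contDiffAt_succ_iff_deriv.mp hf
    obtain ⟨hgd, hg'⟩ := contDiffAt_succ_iff_deriv.mp hg
    have hsucc : (∀ k ≤ n + 1, iteratedDeriv k f a = iteratedDeriv k g a) ↔
        f a = g a ∧ ∀ k ≤ n, iteratedDeriv k (deriv f) a = iteratedDeriv k (deriv g) a := by
      refine ⟨fun h => ⟨h 0 (Nat.zero_le _), fun k hk => ?_⟩, fun ⟨h₀, h⟩ k hk => ?_⟩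
      · simpa only [iteratedDeriv_succ'] using h (k + 1) (by omega)
      · cases k with
        | zero => simpa using h₀
        | succ k => simpa only [iteratedDeriv_succ'] using h k (by omega)
    have hderiv (h₀ : f a = g a) (h₁ : deriv f a = deriv g a) :
        ∀ᶠ y in 𝓝 a, HasDerivAt (fun x => if x < a then f x else g x)
          (if y < a then deriv f y else deriv g y) y := by
      filter_upwards [hfd, hgd] with y hfy hgy
      exact hasDerivAt_ite_lt hfy hgy h₀ h₁
    rw [hsucc, contDiffAt_succ_iff_deriv, ← ih hf' hg']
    constructor
    · rintro ⟨hd, h⟩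
      have h₀ := eq_of_continuousAt_ite_lt hf.continuousAt hd.self_of_nhds.continuousAt
      have h₁ := deriv_eq_of_differentiableAt_ite_lt hfd.self_of_nhds hgd.self_of_nhds
        hd.self_of_nhds h₀
      exact ⟨h₀, h.congr_of_eventuallyEq ((hderiv h₀ h₁).mono fun y hy => hy.deriv.symm)⟩
    · rintro ⟨h₀, h⟩
      have h₁ : deriv f a = deriv g a := by simpa using (ih hf' hg').mp h 0 (Nat.zero_le n)
      exact ⟨(hderiv h₀ h₁).mono fun y hy => hy.differentiableAt,
        h.congr_of_eventuallyEq ((hderiv h₀ h₁).mono fun y hy => hy.deriv)⟩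

end Derivative
end

section
variable {u : ℝ → ℝ} {a c : ℝ}

theorem deriv_const_mul_sq (hu : DifferentiableAt ℝ u a) :
    deriv (fun x => c * u x ^ 2) a = 2 * c * u a * deriv u a := by
  rw [((hu.hasDerivAt.fun_pow 2).const_mul c).deriv]
  ring

theorem deriv_const_mul_sq_of_eq_zero (hu : DifferentiableAt ℝ u a) (h₀ : u a = 0) :
    deriv (fun x => c * u x ^ 2) a = 0 := by
  rw [deriv_const_mul_sq hu, h₀, mul_zero, zero_mul]

theorem iteratedDeriv_two_const_mul_sq_of_eq_zero (hu : ContDiffAt ℝ 2 u a) (h₀ : u a = 0) :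
    iteratedDeriv 2 (fun x => c * u x ^ 2) a = 2 * c * deriv u a ^ 2 := by
  have hdiff : ∀ᶠ y in 𝓝 a, DifferentiableAt ℝ u y :=
    (contDiffAt_succ_iff_deriv (n := 1)).mp hu |>.1
  have hu' : DifferentiableAt ℝ (deriv u) a := (hu.derivWithin (m := 1) le_rfl).differentiableAt_one
  rw [iteratedDeriv_succ, iteratedDeriv_one,
    Filter.EventuallyEq.deriv_eq (hdiff.mono fun y hy => deriv_const_mul_sq (c := c) hy),
    (((hasDerivAt_const a (2 * c)).fun_mul hdiff.self_of_nhds.hasDerivAt).fun_mul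
      hu'.hasDerivAt).deriv, h₀]
  ring

end

theorem stmt_3_general (d kr ka α : ℝ) (hd : 0 < d) (σ : ℝ → ℝ)
    (hσ : ∀ s, σ s =
      if s < d ^ 2 then kr * (1 - s / d ^ 2) ^ (2 : ℕ)
      else ka * ((s / d ^ 2) ^ α - 1) ^ (2 : ℕ)) :
    ContDiffAt ℝ 2 σ (d ^ 2) ↔ kr = α ^ 2 * ka := by
  obtain rfl : σ = _ := funext hσ
  have hD : d ^ 2 ≠ 0 := by positivity
  have hr : ContDiffAt ℝ 2 (fun s : ℝ => 1 - s / d ^ 2) (d ^ 2) := by fun_prop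
  have ha : ContDiffAt ℝ 2 (fun s : ℝ => (s / d ^ 2) ^ α - 1) (d ^ 2) := by
    fun_prop (disch := simp [hD])
  have hr₀ : 1 - d ^ 2 / d ^ 2 = 0 := by rw [div_self hD, sub_self]
  have ha₀ : (d ^ 2 / d ^ 2) ^ α - 1 = 0 := by rw [div_self hD, Real.one_rpow, sub_self]
  have hr' : deriv (fun s : ℝ => 1 - s / d ^ 2) (d ^ 2) = -(1 / d ^ 2) := by simp
  have ha' : deriv (fun s : ℝ => (s / d ^ 2) ^ α - 1) (d ^ 2) = α / d ^ 2 := by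
    simp [hD, div_eq_inv_mul, mul_comm]
  refine (contDiffAt_ite_lt_iff (n := 2) (contDiffAt_const.mul (hr.pow 2))
    (contDiffAt_const.mul (ha.pow 2))).trans ⟨fun h => ?_, fun h k hk => ?_⟩
  · have h₂ := h 2 le_rfl
    rw [iteratedDeriv_two_const_mul_sq_of_eq_zero hr hr₀,
      iteratedDeriv_two_const_mul_sq_of_eq_zero ha ha₀, hr', ha'] at h₂
    field_simp at h₂
    linarith
  · interval_cases k
    · simp [hr₀, ha₀]
    · rw [iteratedDeriv_one, iteratedDeriv_one,
        deriv_const_mul_sq_of_eq_zero (hr.differentiableAt two_ne_zero) hr₀,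
        deriv_const_mul_sq_of_eq_zero (ha.differentiableAt two_ne_zero) ha₀]
    · rw [iteratedDeriv_two_const_mul_sq_of_eq_zero hr hr₀,
        iteratedDeriv_two_const_mul_sq_of_eq_zero ha ha₀, hr', ha', h]
      field_simp

/-- For β = 2, the piecewise potential is twice continuously differentiable
at the junction s = d² if and only if k_r = α² k_a. -/
theorem stmt_3 (d kr ka α : ℝ) (hd : 0 < d) (hkr : 0 ≤ kr) (hka : 0 ≤ ka)
    (hα : 0 < α) (σ : ℝ → ℝ)
    (hσ : ∀ s, σ s =
      if s < d ^ 2 then kr * (1 - s / d ^ 2) ^ (2 : ℕ)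
      else ka * ((s / d ^ 2) ^ α - 1) ^ (2 : ℕ)) :
    ContDiffAt ℝ 2 σ (d ^ 2) ↔ kr = α ^ 2 * ka :=
  stmt_3_general d kr ka α hd σ hσ
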